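/- Entropy balance equation for a confined reservoir: in the Setup, the decrease of system entropy ΔS = S(ρ_i) − S(ρ_U), the entropy production σ = S(ω_U | ρ_U ⊗ ν_i) and the reservoir energy increase ΔQ = tr(ν_U H_R) − tr(ν_i H_R) satisfy ΔS + σ = β·ΔQ. -/

import Mathlib

open Matrix Kronecker ComplexOrder

/-- Logarithm of a matrix, defined via the spectral theorem for Hermitian matrices
(junk value `0` on non-Hermitian matrices).  Since `Real.log 0 = 0`, for a positive
semidefinite matrix this is the logarithm taken on the support, with the convention
`log 0 = 0` on the kernel. -/
noncomputable def mlog {n : Type*} [Fintype n] [DecidableEq n] (A : Matrix n n ℂ) :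
    Matrix n n ℂ :=
  if hA : A.IsHermitian then
    (hA.eigenvectorUnitary : Matrix n n ℂ) *
      Matrix.diagonal (fun i => (Real.log (hA.eigenvalues i) : ℂ)) *
      (star hA.eigenvectorUnitary : Matrix n n ℂ)
  else 0

/-- von Neumann entropy `S(ρ) = -tr(ρ log ρ)`. -/
noncomputable def vnEnt {n : Type*} [Fintype n] [DecidableEq n] (ρ : Matrix n n ℂ) : ℝ :=
  -(Matrix.trace (ρ * mlog ρ)).re

/-- Relative entropy `S(ζ₁|ζ₂) = tr(ζ₁ (log ζ₁ - log ζ₂))`. -/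
noncomputable def relEnt {n : Type*} [Fintype n] [DecidableEq n] (ζ₁ ζ₂ : Matrix n n ℂ) : ℝ :=
  (Matrix.trace (ζ₁ * (mlog ζ₁ - mlog ζ₂))).re

/-- A density matrix: positive semidefinite with unit trace. -/
def IsDensityMatrix {n : Type*} [Fintype n] [DecidableEq n] (ρ : Matrix n n ℂ) : Prop :=
  ρ.PosSemidef ∧ ρ.trace = 1

/-- Partial trace over the reservoir (second) factor:
`(tr_R M)_{ij} = Σ_k M_{(i,k),(j,k)}`. -/
noncomputable def ptraceR {dS dR : ℕ} (M : Matrix (Fin dS × Fin dR) (Fin dS × Fin dR) ℂ) :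
    Matrix (Fin dS) (Fin dS) ℂ :=
  Matrix.of fun i j => ∑ k, M (i, k) (j, k)

/-- Partial trace over the system (first) factor:
`(tr_S M)_{kl} = Σ_i M_{(i,k),(i,l)}`. -/
noncomputable def ptraceS {dS dR : ℕ} (M : Matrix (Fin dS × Fin dR) (Fin dS × Fin dR) ℂ) :
    Matrix (Fin dR) (Fin dR) ℂ :=
  Matrix.of fun k l => ∑ i, M (i, k) (i, l)

/-- The Gibbs state `e^{-βH}/tr(e^{-βH})` at inverse temperature `β`. -/
noncomputable def gibbs {dR : ℕ} (β : ℝ) (H : Matrix (Fin dR) (Fin dR) ℂ) :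
    Matrix (Fin dR) (Fin dR) ℂ :=
  (Matrix.trace (NormedSpace.exp ((-β : ℂ) • H)))⁻¹ • NormedSpace.exp ((-β : ℂ) • H)

/-- The trace norm `‖X‖₁ = tr((X*X)^{1/2})`. -/
noncomputable def traceNorm {n : Type*} [Fintype n] [DecidableEq n] (X : Matrix n n ℂ) : ℝ :=
  (Matrix.trace
    (((Matrix.posSemidef_conjTranspose_mul_self X).1.eigenvectorUnitary : Matrix n n ℂ) *
      Matrix.diagonal (fun i => ((√((Matrix.posSemidef_conjTranspose_mul_self X).1.eigenvalues i) : ℝ) : ℂ)) *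
      (star (Matrix.posSemidef_conjTranspose_mul_self X).1.eigenvectorUnitary : Matrix n n ℂ))).re

/-! On positive definite matrices `mlog` inverts the matrix exponential. Hence the logarithm
commutes with unitary conjugation, turns `A ⊗ B` into `log A ⊗ 1 + 1 ⊗ log B`, and
`log ν_i = -β H_R - log Z`. Substituting into the entropies, everything cancels except
`tr((ν_i - ν_U) log ν_i) = β (tr(ν_U H_R) - tr(ν_i H_R))`, where the `log Z` terms drop out
because `ν_i` and `ν_U` both have trace one. -/

namespace Matrix

variable {n m α : Type*}

lemma IsHermitian.kronecker [CommSemiring α] [StarRing α] {A : Matrix n n α} {B : Matrix m m α}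
    (hA : A.IsHermitian) (hB : B.IsHermitian) : (A ⊗ₖ B).IsHermitian :=
  (conjTranspose_kronecker A B).trans (by rw [hA.eq, hB.eq])

variable [Fintype n] [DecidableEq n] [Fintype m] [DecidableEq m]

section KroneckerRingHom

variable [CommSemiring α]

def kroneckerOneRingHom : Matrix n n α →+* Matrix (n × m) (n × m) α where
  toFun X := X ⊗ₖ 1
  map_one' := one_kronecker_one
  map_mul' X Y := by rw [← mul_kronecker_mul, mul_one]
  map_zero' := zero_kronecker _
  map_add' X Y := add_kronecker _ _ _

def oneKroneckerRingHom : Matrix m m α →+* Matrix (n × m) (n × m) α where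
  toFun Y := 1 ⊗ₖ Y
  map_one' := one_kronecker_one
  map_mul' X Y := by rw [← mul_kronecker_mul, mul_one]
  map_zero' := kronecker_zero _
  map_add' X Y := kronecker_add _ _ _

end KroneckerRingHom

open scoped Matrix.Norms.Operator in
lemma exp_kronecker_one (X : Matrix n n ℂ) :
    NormedSpace.exp (X ⊗ₖ (1 : Matrix m m ℂ)) = NormedSpace.exp X ⊗ₖ 1 :=
  (NormedSpace.map_exp (kroneckerOneRingHom (m := m)) (by
    show Continuous fun X : Matrix n n ℂ => X ⊗ₖ (1 : Matrix m m ℂ)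
    unfold kroneckerMap; fun_prop) X).symm

open scoped Matrix.Norms.Operator in
lemma exp_one_kronecker (Y : Matrix m m ℂ) :
    NormedSpace.exp ((1 : Matrix n n ℂ) ⊗ₖ Y) = 1 ⊗ₖ NormedSpace.exp Y :=
  (NormedSpace.map_exp (oneKroneckerRingHom (n := n)) (by
    show Continuous fun Y : Matrix m m ℂ => (1 : Matrix n n ℂ) ⊗ₖ Y
    unfold kroneckerMap; fun_prop) Y).symm

lemma exp_kronecker_one_add_one_kronecker (X : Matrix n n ℂ) (Y : Matrix m m ℂ) :
    NormedSpace.exp (X ⊗ₖ 1 + 1 ⊗ₖ Y) = NormedSpace.exp X ⊗ₖ NormedSpace.exp Y := by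
  have hcomm : Commute (X ⊗ₖ (1 : Matrix m m ℂ)) ((1 : Matrix n n ℂ) ⊗ₖ Y) := by
    simp only [Commute, SemiconjBy, ← mul_kronecker_mul, mul_one, one_mul]
  rw [exp_add_of_commute _ _ hcomm, exp_kronecker_one, exp_one_kronecker, ← mul_kronecker_mul,
    mul_one, one_mul]

lemma mlog_eq_cfc {A : Matrix n n ℂ} (hA : A.IsHermitian) : mlog A = cfc Real.log A := by
  rw [mlog, dif_pos hA, hA.cfc_eq, IsHermitian.cfc, Unitary.conjStarAlgAut_apply]
  rfl

lemma IsHermitian.cfc_comp (g f : ℝ → ℝ) {A : Matrix n n ℂ} (hA : A.IsHermitian) :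
    cfc g (cfc f A) = cfc (g ∘ f) A :=
  (_root_.cfc_comp g f A hA.isSelfAdjoint ((A.finite_real_spectrum.image f).continuousOn g)
    (A.finite_real_spectrum.continuousOn f)).symm

lemma PosDef.spectrum_pos {A : Matrix n n ℂ} (hA : A.PosDef) :
    ∀ x ∈ spectrum ℝ A, 0 < x := by
  rw [hA.isHermitian.spectrum_real_eq_range_eigenvalues]
  rintro - ⟨i, rfl⟩
  exact hA.eigenvalues_pos i

lemma PosDef.isHermitian_mlog {A : Matrix n n ℂ} (hA : A.PosDef) : (mlog A).IsHermitian :=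
  mlog_eq_cfc hA.isHermitian ▸ cfc_predicate (R := ℝ) Real.log A

lemma exp_eq_cfc_exp {S : Matrix n n ℂ} (hS : S.IsHermitian) :
    NormedSpace.exp S = cfc Real.exp S := by
  set V := hS.eigenvectorUnitary
  have hV : (star V : Matrix n n ℂ) = (V : Matrix n n ℂ)⁻¹ :=
    (inv_eq_left_inv (Unitary.coe_star_mul_self V)).symm
  conv_lhs => rw [hS.spectral_theorem]
  rw [hS.cfc_eq, IsHermitian.cfc, Unitary.conjStarAlgAut_apply, Unitary.conjStarAlgAut_apply, hV,
    exp_conj (V : Matrix n n ℂ) _ (Unitary.toUnits V).isUnit, exp_diagonal]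
  congr 3
  funext i
  simp [← Complex.exp_eq_exp_ℂ, Complex.ofReal_exp]

open scoped MatrixOrder in
lemma IsHermitian.posDef_exp {S : Matrix n n ℂ} (hS : S.IsHermitian) :
    (NormedSpace.exp S).PosDef := by
  rw [exp_eq_cfc_exp hS, ← isStrictlyPositive_iff_posDef,
    cfc_isStrictlyPositive_iff Real.exp S (S.finite_real_spectrum.continuousOn _) hS.isSelfAdjoint]
  exact fun x _ => Real.exp_pos x

lemma mlog_exp {S : Matrix n n ℂ} (hS : S.IsHermitian) : mlog (NormedSpace.exp S) = S := by
  rw [mlog_eq_cfc hS.exp, exp_eq_cfc_exp hS, hS.cfc_comp]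
  simpa using cfc_id ℝ S

lemma exp_mlog {A : Matrix n n ℂ} (hA : A.PosDef) : NormedSpace.exp (mlog A) = A := by
  rw [exp_eq_cfc_exp hA.isHermitian_mlog, mlog_eq_cfc hA.isHermitian, hA.isHermitian.cfc_comp]
  conv_rhs => rw [← cfc_id ℝ A hA.isHermitian.isSelfAdjoint]
  exact cfc_congr fun x hx => Real.exp_log (hA.spectrum_pos x hx)

lemma mlog_smul {A : Matrix n n ℂ} (hA : A.PosDef) {c : ℝ} (hc : c ≠ 0) :
    mlog (c • A) = mlog A + (Real.log c : ℂ) • 1 := by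
  have hcA : (c • A).IsHermitian := (IsSelfAdjoint.all c).smul hA.isHermitian.isSelfAdjoint
  rw [mlog_eq_cfc hcA, mlog_eq_cfc hA.isHermitian,
    ← cfc_smul_id (R := ℝ) c A hA.isHermitian.isSelfAdjoint, hA.isHermitian.cfc_comp,
    cfc_congr (f := Real.log ∘ (c • ·)) (g := fun x => Real.log c + Real.log x)
      fun x hx => Real.log_mul hc (hA.spectrum_pos x hx).ne',
    cfc_const_add _ _ _ (A.finite_real_spectrum.continuousOn _) hA.isHermitian.isSelfAdjoint,
    Algebra.algebraMap_eq_smul_one, Complex.coe_smul, add_comm]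

lemma mlog_unitary_conj {A : Matrix n n ℂ} (hA : A.PosDef) {U : Matrix n n ℂ}
    (hU : U ∈ unitaryGroup n ℂ) : mlog (U * A * Uᴴ) = U * mlog A * Uᴴ := by
  have hUinv : Uᴴ = U⁻¹ := (inv_eq_left_inv (mem_unitaryGroup_iff'.mp hU)).symm
  conv_lhs =>
    rw [← exp_mlog hA, hUinv, ← exp_conj U _ (Unitary.toUnits ⟨U, hU⟩).isUnit, ← hUinv]
  exact mlog_exp (isHermitian_mul_mul_conjTranspose U hA.isHermitian_mlog)

lemma mlog_kronecker {A : Matrix n n ℂ} {B : Matrix m m ℂ} (hA : A.PosDef) (hB : B.PosDef) :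
    mlog (A ⊗ₖ B) = mlog A ⊗ₖ 1 + 1 ⊗ₖ mlog B := by
  conv_lhs => rw [← exp_mlog hA, ← exp_mlog hB, ← exp_kronecker_one_add_one_kronecker]
  exact mlog_exp ((hA.isHermitian_mlog.kronecker isHermitian_one).add
    (isHermitian_one.kronecker hB.isHermitian_mlog))

end Matrix

section Entropy

variable {n m : Type*} [Fintype n] [DecidableEq n] [Fintype m] [DecidableEq m]

lemma relEnt_eq_neg_vnEnt_sub (ζ₁ ζ₂ : Matrix n n ℂ) :
    relEnt ζ₁ ζ₂ = -vnEnt ζ₁ - (trace (ζ₁ * mlog ζ₂)).re := by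
  rw [relEnt, vnEnt, Matrix.mul_sub, trace_sub, Complex.sub_re, neg_neg]

lemma vnEnt_unitary_conj {A : Matrix n n ℂ} (hA : A.PosDef) {U : Matrix n n ℂ}
    (hU : U ∈ unitaryGroup n ℂ) : vnEnt (U * A * Uᴴ) = vnEnt A := by
  have hUU : Uᴴ * U = 1 := mem_unitaryGroup_iff'.mp hU
  have hconj : U * A * Uᴴ * (U * mlog A * Uᴴ) = U * (A * mlog A) * Uᴴ := by
    simp only [Matrix.mul_assoc, ← Matrix.mul_assoc Uᴴ U, hUU, Matrix.one_mul]
  rw [vnEnt, vnEnt, mlog_unitary_conj hA hU, hconj, trace_mul_cycle, ← Matrix.mul_assoc, hUU,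
    Matrix.one_mul]

lemma vnEnt_kronecker {A : Matrix n n ℂ} {B : Matrix m m ℂ} (hA : A.PosDef) (hB : B.PosDef)
    (hAtr : A.trace = 1) (hBtr : B.trace = 1) : vnEnt (A ⊗ₖ B) = vnEnt A + vnEnt B := by
  rw [vnEnt, vnEnt, vnEnt, mlog_kronecker hA hB, Matrix.mul_add, trace_add,
    ← mul_kronecker_mul, ← mul_kronecker_mul, Matrix.mul_one, Matrix.mul_one, trace_kronecker,
    trace_kronecker, hAtr, hBtr, mul_one, one_mul, Complex.add_re, neg_add]

end Entropy

section PartialTrace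

variable {dS dR : ℕ}

lemma trace_mul_kronecker_one (M : Matrix (Fin dS × Fin dR) (Fin dS × Fin dR) ℂ)
    (X : Matrix (Fin dS) (Fin dS) ℂ) :
    trace (M * (X ⊗ₖ (1 : Matrix (Fin dR) (Fin dR) ℂ))) = trace (ptraceR M * X) := by
  simp only [trace, diag, mul_apply, ptraceR, of_apply, kroneckerMap_apply, one_apply,
    Fintype.sum_prod_type, mul_ite, mul_one, mul_zero, Finset.sum_ite_eq', Finset.mem_univ,
    if_true, Finset.sum_mul]
  exact Finset.sum_congr rfl fun i _ => Finset.sum_comm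

lemma trace_mul_one_kronecker (M : Matrix (Fin dS × Fin dR) (Fin dS × Fin dR) ℂ)
    (Y : Matrix (Fin dR) (Fin dR) ℂ) :
    trace (M * ((1 : Matrix (Fin dS) (Fin dS) ℂ) ⊗ₖ Y)) = trace (ptraceS M * Y) := by
  simp only [trace, diag, mul_apply, ptraceS, of_apply, kroneckerMap_apply, one_apply,
    Fintype.sum_prod_type, ite_mul, one_mul, zero_mul, Finset.sum_mul, mul_ite, mul_zero,
    Finset.sum_ite_irrel, Finset.sum_const_zero, Finset.sum_ite_eq', Finset.mem_univ, if_true]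
  rw [Finset.sum_comm]
  exact Finset.sum_congr rfl fun _ _ => Finset.sum_comm

lemma trace_ptraceS (M : Matrix (Fin dS × Fin dR) (Fin dS × Fin dR) ℂ) :
    trace (ptraceS M) = trace M := by
  rw [trace, trace, Fintype.sum_prod_type, Finset.sum_comm]
  simp [ptraceS]

lemma ptraceR_eq_sum_submatrix (M : Matrix (Fin dS × Fin dR) (Fin dS × Fin dR) ℂ) :
    ptraceR M = ∑ k, M.submatrix (·, k) (·, k) := by
  ext i j
  simp [ptraceR, Matrix.sum_apply]

lemma Matrix.PosDef.ptraceR [Nonempty (Fin dR)]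
    {M : Matrix (Fin dS × Fin dR) (Fin dS × Fin dR) ℂ} (hM : M.PosDef) :
    (ptraceR M).PosDef := by
  rw [ptraceR_eq_sum_submatrix]
  exact posDef_sum Finset.univ_nonempty fun k _ =>
    hM.submatrix fun i j h => (Prod.ext_iff.mp h).1

lemma trace_mul_mlog_kronecker {A : Matrix (Fin dS) (Fin dS) ℂ} {B : Matrix (Fin dR) (Fin dR) ℂ}
    (hA : A.PosDef) (hB : B.PosDef) (M : Matrix (Fin dS × Fin dR) (Fin dS × Fin dR) ℂ) :
    trace (M * mlog (A ⊗ₖ B)) = trace (ptraceR M * mlog A) + trace (ptraceS M * mlog B) := by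
  rw [mlog_kronecker hA hB, Matrix.mul_add, trace_add, trace_mul_kronecker_one,
    trace_mul_one_kronecker]

end PartialTrace

section Gibbs

variable {dR : ℕ} (β : ℝ) {H : Matrix (Fin dR) (Fin dR) ℂ}

noncomputable def partitionFunction (H : Matrix (Fin dR) (Fin dR) ℂ) : ℝ :=
  (trace (NormedSpace.exp ((-β : ℂ) • H))).re

lemma Matrix.IsHermitian.neg_ofReal_smul (hH : H.IsHermitian) : ((-β : ℂ) • H).IsHermitian :=
  IsSelfAdjoint.smul (by simp [IsSelfAdjoint]) hH.isSelfAdjoint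

variable [Nonempty (Fin dR)]

lemma ofReal_partitionFunction (hH : H.IsHermitian) :
    (partitionFunction β H : ℂ) = trace (NormedSpace.exp ((-β : ℂ) • H)) :=
  Complex.ext rfl (Complex.pos_iff.mp (hH.neg_ofReal_smul β).posDef_exp.trace_pos).2

lemma partitionFunction_pos (hH : H.IsHermitian) : 0 < partitionFunction β H :=
  (Complex.pos_iff.mp (hH.neg_ofReal_smul β).posDef_exp.trace_pos).1

lemma gibbs_eq_smul_exp (hH : H.IsHermitian) :
    gibbs β H = (partitionFunction β H)⁻¹ • NormedSpace.exp ((-β : ℂ) • H) := by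
  rw [gibbs, ← ofReal_partitionFunction β hH, ← Complex.ofReal_inv, Complex.coe_smul]

lemma posDef_gibbs (hH : H.IsHermitian) : (gibbs β H).PosDef := by
  rw [gibbs_eq_smul_exp β hH]
  exact (hH.neg_ofReal_smul β).posDef_exp.smul (inv_pos.mpr (partitionFunction_pos β hH))

lemma trace_gibbs (hH : H.IsHermitian) : trace (gibbs β H) = 1 := by
  rw [gibbs, trace_smul, smul_eq_mul, ← ofReal_partitionFunction β hH]
  exact inv_mul_cancel₀ (Complex.ofReal_ne_zero.mpr (partitionFunction_pos β hH).ne')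

lemma mlog_gibbs (hH : H.IsHermitian) :
    mlog (gibbs β H) = (-β : ℂ) • H - (Real.log (partitionFunction β H) : ℂ) • 1 := by
  rw [gibbs_eq_smul_exp β hH,
    mlog_smul (hH.neg_ofReal_smul β).posDef_exp (inv_ne_zero (partitionFunction_pos β hH).ne'),
    mlog_exp (hH.neg_ofReal_smul β), Real.log_inv, Complex.ofReal_neg, neg_smul, neg_smul,
    sub_eq_add_neg]

lemma trace_mul_mlog_gibbs (hH : H.IsHermitian) (N : Matrix (Fin dR) (Fin dR) ℂ) :
    trace (N * mlog (gibbs β H))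
      = -β * trace (N * H) - Real.log (partitionFunction β H) * trace N := by
  rw [mlog_gibbs β hH, Matrix.mul_sub, trace_sub, Matrix.mul_smul, Matrix.mul_smul,
    Matrix.mul_one, trace_smul, trace_smul, smul_eq_mul, smul_eq_mul]

end Gibbs

theorem entropy_balance_confined_general {dS dR : ℕ} (hdR : 0 < dR)
    (β : ℝ)
    (HR : Matrix (Fin dR) (Fin dR) ℂ) (hHR : HR.IsHermitian)
    (ρi : Matrix (Fin dS) (Fin dS) ℂ) (hρi : ρi.PosDef) (hρitr : ρi.trace = 1)
    (U : Matrix (Fin dS × Fin dR) (Fin dS × Fin dR) ℂ)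
    (hU : U ∈ Matrix.unitaryGroup (Fin dS × Fin dR) ℂ) :
    let νi := gibbs β HR
    let ωU := U * (ρi ⊗ₖ νi) * Uᴴ
    let ρU := ptraceR ωU
    let νU := ptraceS ωU
    (vnEnt ρi - vnEnt ρU) + relEnt ωU (ρU ⊗ₖ νi)
      = β * ((Matrix.trace (νU * HR)).re - (Matrix.trace (νi * HR)).re) := by
  intro νi ωU ρU νU
  have : Nonempty (Fin dR) := Fin.pos_iff_nonempty.mp hdR
  have hνi : νi.PosDef := posDef_gibbs β hHR
  have hνitr : νi.trace = 1 := trace_gibbs β hHR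
  have hω : ωU.PosDef :=
    (IsUnit.posDef_star_right_conjugate_iff (Unitary.toUnits ⟨U, hU⟩).isUnit).mpr
      (hρi.kronecker hνi)
  have hνUtr : νU.trace = 1 := by
    have hUU : Uᴴ * U = 1 := mem_unitaryGroup_iff'.mp hU
    rw [trace_ptraceS, trace_mul_cycle, hUU, Matrix.one_mul, trace_kronecker, hρitr, hνitr,
      one_mul]
  rw [relEnt_eq_neg_vnEnt_sub, trace_mul_mlog_kronecker hω.ptraceR hνi,
    vnEnt_unitary_conj (hρi.kronecker hνi) hU, vnEnt_kronecker hρi hνi hρitr hνitr,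
    trace_mul_mlog_gibbs β hHR, vnEnt, vnEnt, vnEnt, trace_mul_mlog_gibbs β hHR, hνitr, hνUtr]
  simp only [ρU, νU, Complex.add_re, Complex.sub_re, Complex.mul_re, Complex.neg_re,
    Complex.neg_im, Complex.ofReal_re, Complex.ofReal_im]
  ring

/-- **Entropy balance equation for a confined reservoir.**
The decrease of system entropy `ΔS = S(ρ_i) - S(ρ_U)`, the entropy production
`σ = S(ω_U | ρ_U ⊗ ν_i)` and the reservoir energy increase
`ΔQ = tr(ν_U H_R) - tr(ν_i H_R)` satisfy `ΔS + σ = β ΔQ`. -/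
theorem entropy_balance_confined {dS dR : ℕ} (hdR : 0 < dR)
    (β : ℝ) (hβ : 0 < β)
    (HR : Matrix (Fin dR) (Fin dR) ℂ) (hHR : HR.IsHermitian)
    (ρi : Matrix (Fin dS) (Fin dS) ℂ) (hρi : ρi.PosDef) (hρitr : ρi.trace = 1)
    (U : Matrix (Fin dS × Fin dR) (Fin dS × Fin dR) ℂ)
    (hU : U ∈ Matrix.unitaryGroup (Fin dS × Fin dR) ℂ) :
    let νi := gibbs β HR
    let ωU := U * (ρi ⊗ₖ νi) * Uᴴ
    let ρU := ptraceR ωU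
    let νU := ptraceS ωU
    (vnEnt ρi - vnEnt ρU) + relEnt ωU (ρU ⊗ₖ νi)
      = β * ((Matrix.trace (νU * HR)).re - (Matrix.trace (νi * HR)).re) :=
  entropy_balance_confined_general hdR β HR hHR ρi hρi hρitr U hU
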